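/- arXiv:2205.12868 — 3 statements merged into one kernel-verified Lean document; each statement's English description precedes it below -/
import Mathlib

section
/- For mutually independent standard Gaussian random variables (γ_j)_{j∈ℤ∖{0}} and any K > 0 and 0 < t < 1/2, the probability that ∑_{j≠0} γ_j²/j² ≥ K is at most e^{-tK} · π√(2t)/sin(π√(2t)). -/
/-!
Chernoff's bound, applied to finite partial sums. For a finite set `S` of indices, independence
gives `E exp (t ∑_{j ∈ S} γ_j² / j²) = ∏_{j ∈ S} (1 - 2t / j²)^{-1/2}`. Pairing `j` with `-j`,
this is at most a partial Euler product `∏_{n ≤ N} (1 - 2t / n²)⁻¹`, and these are bounded by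
`π√(2t) / sin (π√(2t))` because the partial products of `sin (πx) = πx ∏ (1 - x² / n²)` decrease
for `0 < x < 1`. The event `K ≤ ∑_j γ_j² / j²` is contained in the increasing union over `S` of
the events `K' ≤ ∑_{j ∈ S} γ_j² / j²` for any `K' < K`; letting `K' ↑ K` gives the bound.
-/

open MeasureTheory ProbabilityTheory Real Finset
open scoped NNReal

/-- For `2 * v * u ≥ 1` both sides are junk zeros: the integral diverges and `√` of a
nonpositive number is `0`. -/
lemma mgf_sq_gaussianReal (v : ℝ≥0) (u : ℝ) :
    mgf (fun x => x ^ 2) (gaussianReal 0 v) u = (√(1 - 2 * v * u))⁻¹ := by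
  rcases eq_or_ne v 0 with rfl | hv
  · simp [mgf]
  have hv' : (0 : ℝ) < v := by positivity
  have hdens : ∀ x : ℝ, gaussianPDFReal 0 v x • rexp (u * x ^ 2)
      = (√(2 * π * v))⁻¹ * rexp (-(1 / (2 * v) - u) * x ^ 2) := by
    intro x
    rw [gaussianPDFReal, smul_eq_mul, mul_assoc, ← Real.exp_add]
    congr 2
    field_simp
    ring
  have hquot : π / (1 / (2 * v) - u) = 2 * π * v * (1 - 2 * v * u)⁻¹ := by
    rw [show 1 / (2 * (v : ℝ)) - u = (1 - 2 * v * u) / (2 * v) by field_simp,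
      div_div_eq_mul_div]
    ring
  rw [mgf, integral_gaussianReal_eq_integral_smul hv]
  simp_rw [hdens]
  rw [integral_const_mul, integral_gaussian, hquot,
    Real.sqrt_mul (by positivity : (0 : ℝ) ≤ 2 * π * v),
    Real.sqrt_inv, inv_mul_cancel_left₀ (by positivity)]

lemma mgf_sq_div_of_map_eq_gaussianReal {Ω : Type*} [MeasurableSpace Ω] {μ : Measure Ω}
    {X : Ω → ℝ} {v : ℝ≥0} (hX : μ.map X = gaussianReal 0 v) (c t : ℝ) :
    mgf (fun ω => X ω ^ 2 / c) μ t = (√(1 - 2 * v * t / c))⁻¹ := by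
  have hXm : AEMeasurable X μ := .of_map_ne_zero (by simp [hX, IsProbabilityMeasure.ne_zero])
  calc mgf (fun ω => X ω ^ 2 / c) μ t
      = mgf (fun x => c⁻¹ * x ^ 2) (μ.map X) t := by
        rw [mgf_map hXm (by fun_prop)]
        simp only [Function.comp_def, div_eq_inv_mul]
    _ = (√(1 - 2 * v * t / c))⁻¹ := by
        rw [mgf_const_mul, hX, mgf_sq_gaussianReal]
        ring_nf

lemma Finset.prod_Icc_neg_eq_mul_prod_range_sq {M : Type*} [CommMonoid M] {f : ℤ → M}
    (hf : f.Even) (N : ℕ) :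
    ∏ j ∈ Icc (-N : ℤ) N, f j = f 0 * ∏ n ∈ range N, f (n + 1) ^ 2 := by
  induction N with
  | zero => simp
  | succ N ih =>
    rw [Nat.cast_add, Nat.cast_one, Icc_succ_succ, prod_union (by simp), prod_pair (by lia), ih,
      prod_range_succ, hf, sq, mul_assoc]

lemma one_sub_div_mem_Ioc {a b : ℝ} (ha0 : 0 ≤ a) (ha1 : a < 1) (hb : 1 ≤ b) :
    1 - a / b ∈ Set.Ioc 0 1 := by
  constructor
  · rw [sub_pos, div_lt_one (by positivity)]
    linarith
  · have : 0 ≤ a / b := by positivity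
    linarith

lemma prod_inv_one_sub_sq_div_sq_le {s : ℝ} (hs0 : 0 < s) (hs1 : s < 1) (N : ℕ) :
    ∏ n ∈ range N, (1 - s ^ 2 / ((n : ℝ) + 1) ^ 2)⁻¹ ≤ π * s / sin (π * s) := by
  have hfac : ∀ n : ℕ, 1 - s ^ 2 / ((n : ℝ) + 1) ^ 2 ∈ Set.Ioc 0 1 := fun n =>
    one_sub_div_mem_Ioc (sq_nonneg s) (by nlinarith)
      (one_le_pow₀ (by linarith [n.cast_nonneg (α := ℝ)]))
  have hanti : Antitone fun N => π * s * ∏ n ∈ range N, (1 - s ^ 2 / ((n : ℝ) + 1) ^ 2) := by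
    refine antitone_nat_of_succ_le fun N => ?_
    rw [prod_range_succ, ← mul_assoc]
    exact mul_le_of_le_one_right (mul_pos (by positivity) (prod_pos fun n _ => (hfac n).1)).le
      (hfac N).2
  have hsin : sin (π * s) ≤ π * s * ∏ n ∈ range N, (1 - s ^ 2 / ((n : ℝ) + 1) ^ 2) :=
    hanti.le_of_tendsto (tendsto_euler_sin_prod s) N
  have hsin_pos : 0 < sin (π * s) :=
    sin_pos_of_pos_of_lt_pi (by positivity) (by nlinarith [pi_pos])
  rw [prod_inv_distrib, le_div_iff₀ hsin_pos, inv_mul_le_iff₀ (prod_pos fun n _ => (hfac n).1)]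
  linarith

/-- At `j = 0` the factor is `1`, since `s ^ 2 / 0 = 0`. -/
lemma one_le_inv_sqrt_one_sub_sq_div_sq {s : ℝ} (hs : s ^ 2 < 1) (j : ℤ) :
    1 ≤ (√(1 - s ^ 2 / (j : ℝ) ^ 2))⁻¹ := by
  rcases eq_or_ne j 0 with rfl | hj
  · simp
  have hj1 : (1 : ℝ) ≤ (j : ℝ) ^ 2 := by
    rw [← sq_abs, ← Int.cast_abs]
    exact one_le_pow₀ (by exact_mod_cast Int.one_le_abs hj)
  obtain ⟨hpos, hle⟩ := one_sub_div_mem_Ioc (sq_nonneg s) hs hj1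
  exact one_le_inv_iff₀.2 ⟨sqrt_pos.2 hpos, sqrt_le_one.2 hle⟩

lemma prod_inv_sqrt_one_sub_sq_div_sq_le {s : ℝ} (hs0 : 0 < s) (hs1 : s < 1) (S : Finset ℤ) :
    ∏ j ∈ S, (√(1 - s ^ 2 / (j : ℝ) ^ 2))⁻¹ ≤ π * s / sin (π * s) := by
  have hs : s ^ 2 < 1 := by nlinarith
  set f : ℤ → ℝ := fun j => (√(1 - s ^ 2 / (j : ℝ) ^ 2))⁻¹
  have hf_even : f.Even := fun j => by simp [f]
  have hf_succ : ∀ n : ℕ, f (n + 1) ^ 2 = (1 - s ^ 2 / ((n : ℝ) + 1) ^ 2)⁻¹ := fun n => by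
    have hn : (1 : ℝ) ≤ ((n : ℝ) + 1) ^ 2 := one_le_pow₀ (by linarith [n.cast_nonneg (α := ℝ)])
    simp only [f, inv_pow, Int.cast_add, Int.cast_natCast, Int.cast_one]
    rw [sq_sqrt (one_sub_div_mem_Ioc (sq_nonneg s) hs hn).1.le]
  set N := S.sup Int.natAbs
  have hS : S ⊆ Icc (-N : ℤ) N := fun j hj => by
    have : j.natAbs ≤ N := le_sup (f := Int.natAbs) hj
    rw [mem_Icc]
    omega
  calc ∏ j ∈ S, f j
      ≤ ∏ j ∈ Icc (-N : ℤ) N, f j :=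
        prod_le_prod_of_subset_of_one_le hS
          (fun j _ => zero_le_one.trans (one_le_inv_sqrt_one_sub_sq_div_sq hs j))
          (fun j _ _ => one_le_inv_sqrt_one_sub_sq_div_sq hs j)
    _ = ∏ n ∈ range N, (1 - s ^ 2 / ((n : ℝ) + 1) ^ 2)⁻¹ := by
        rw [prod_Icc_neg_eq_mul_prod_range_sq hf_even, prod_congr rfl fun n _ => hf_succ n]
        simp [f]
    _ ≤ π * s / sin (π * s) := prod_inv_one_sub_sq_div_sq_le hs0 hs1 N

section

variable {Ω ι : Type*} [MeasurableSpace Ω] {μ : Measure Ω}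

lemma measure_tsum_ge_le_iSup [Countable ι] {X : ι → Ω → ℝ} (hX : ∀ i ω, 0 ≤ X i ω)
    {K K' : ℝ} (hK : 0 < K) (hK' : K' < K) :
    μ {ω | K ≤ ∑' i, X i ω} ≤ ⨆ s : Finset ι, μ {ω | K' ≤ ∑ i ∈ s, X i ω} := by
  classical
  have hmono : Monotone fun s : Finset ι => {ω | K' ≤ ∑ i ∈ s, X i ω} :=
    fun s t hst ω hω => hω.trans (sum_le_sum_of_subset_of_nonneg hst fun i _ _ => hX i ω)
  rw [← hmono.directed_le.measure_iUnion]
  refine measure_mono fun ω hω => ?_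
  have hsum : Summable fun i => X i ω := by
    by_contra h
    rw [Set.mem_ofPred_eq, tsum_eq_zero_of_not_summable h] at hω
    linarith
  obtain ⟨s, hs⟩ := (hsum.hasSum.eventually (lt_mem_nhds (hK'.trans_le hω))).exists
  exact Set.mem_iUnion.2 ⟨s, hs.le⟩

lemma measureReal_tsum_ge_le [IsFiniteMeasure μ] [Countable ι] {X : ι → Ω → ℝ}
    (hX : ∀ i ω, 0 ≤ X i ω) {K : ℝ} (hK : 0 < K) {B : ℝ → ℝ} (hB : ContinuousAt B K)
    (h : ∀ K' < K, ∀ s : Finset ι, μ.real {ω | K' ≤ ∑ i ∈ s, X i ω} ≤ B K') :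
    μ.real {ω | K ≤ ∑' i, X i ω} ≤ B K := by
  refine ge_of_tendsto (hB.tendsto.mono_left nhdsWithin_le_nhds)
    (eventually_nhdsWithin_of_forall (s := Set.Iio K) fun K' hK' => ?_)
  have hB' : 0 ≤ B K' := measureReal_nonneg.trans (h K' hK' ∅)
  refine ENNReal.toReal_le_of_le_ofReal hB' ((measure_tsum_ge_le_iSup hX hK hK').trans ?_)
  exact iSup_le fun s => (ENNReal.le_ofReal_iff_toReal_le (measure_ne_top _ _) hB').2 (h K' hK' s)

lemma ProbabilityTheory.iIndepFun.measureReal_sum_ge_le [IsProbabilityMeasure μ]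
    {X : ι → Ω → ℝ} (hindep : iIndepFun X μ) (hX : ∀ i, AEMeasurable (X i) μ) {t : ℝ}
    (ht : 0 ≤ t) (hint : ∀ i, Integrable (fun ω => exp (t * X i ω)) μ) (s : Finset ι) (ε : ℝ) :
    μ.real {ω | ε ≤ ∑ i ∈ s, X i ω} ≤ exp (-t * ε) * ∏ i ∈ s, mgf (X i) μ t := by
  have hmgf := hindep.mgf_sum₀ hX s (t := t)
  have hint_sum : Integrable (fun ω => exp (t * (∑ i ∈ s, X i) ω)) μ := by
    rw [← mgf_pos_iff, hmgf]
    exact prod_pos fun i _ => mgf_pos (hint i)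
  simpa [hmgf] using measure_ge_le_exp_mul_mgf ε ht hint_sum

end

theorem stmt0_general {Ω : Type*} [MeasureSpace Ω] [IsProbabilityMeasure (ℙ : Measure Ω)]
    (γ : {j : ℤ // j ≠ 0} → Ω → ℝ)
    (hindep : iIndepFun γ ℙ)
    (hgauss : ∀ j, Measure.map (γ j) ℙ = gaussianReal 0 1)
    (K t : ℝ) (hK : 0 < K) (ht : 0 < t) (ht2 : t < 1/2) :
    (ℙ {ω | K ≤ ∑' j : {j : ℤ // j ≠ 0}, (γ j ω)^2 / ((j : ℤ) : ℝ)^2}).toReal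
      ≤ Real.exp (-t * K) * (Real.pi * Real.sqrt (2*t)) / Real.sin (Real.pi * Real.sqrt (2*t)) := by
  set s := √(2 * t)
  have hs0 : 0 < s := sqrt_pos.2 (by linarith)
  have hs1 : s < 1 := (sqrt_lt' one_pos).2 (by linarith)
  have hs2 : s ^ 2 = 2 * t := sq_sqrt (by linarith)
  set X : {j : ℤ // j ≠ 0} → Ω → ℝ := fun j ω => γ j ω ^ 2 / ((j : ℤ) : ℝ) ^ 2
  have hX_indep : iIndepFun X ℙ :=
    hindep.comp (fun j x => x ^ 2 / ((j : ℤ) : ℝ) ^ 2) fun _ => by fun_prop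
  have hX_meas : ∀ j, AEMeasurable (X j) ℙ := fun j =>
    ((AEMeasurable.of_map_ne_zero (by simp [hgauss j, IsProbabilityMeasure.ne_zero])).pow_const
      2).div_const _
  have hX_mgf : ∀ j, mgf (X j) ℙ t = (√(1 - s ^ 2 / ((j : ℤ) : ℝ) ^ 2))⁻¹ := fun j => by
    rw [mgf_sq_div_of_map_eq_gaussianReal (hgauss j), hs2, NNReal.coe_one, mul_one]
  have hX_int : ∀ j, Integrable (fun ω => exp (t * X j ω)) ℙ := fun j => mgf_pos_iff.1 <| by
    rw [hX_mgf]
    exact one_pos.trans_le (one_le_inv_sqrt_one_sub_sq_div_sq (by nlinarith) j)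
  have hpartial : ∀ K' < K, ∀ S : Finset {j : ℤ // j ≠ 0},
      (ℙ : Measure Ω).real {ω | K' ≤ ∑ j ∈ S, X j ω} ≤ exp (-t * K') * (π * s / sin (π * s)) := by
    intro K' _ S
    refine (hX_indep.measureReal_sum_ge_le hX_meas ht.le hX_int S K').trans ?_
    gcongr
    simp_rw [hX_mgf]
    simpa only [prod_map, Function.Embedding.subtype_apply] using
      prod_inv_sqrt_one_sub_sq_div_sq_le hs0 hs1 (S.map (Function.Embedding.subtype _))
  rw [mul_div_assoc]
  exact measureReal_tsum_ge_le (fun j ω => by positivity) hK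
    (B := fun K' => exp (-t * K') * (π * s / sin (π * s))) (by fun_prop) hpartial

/-- For mutually independent standard Gaussian random variables `(γ_j)_{j∈ℤ∖{0}}`,
any `K > 0` and `0 < t < 1/2`, the probability that `∑_{j≠0} γ_j²/j² ≥ K` is at most
`e^{-tK} · π√(2t)/sin(π√(2t))`. -/
theorem stmt0 {Ω : Type*} [MeasureSpace Ω] [IsProbabilityMeasure (ℙ : Measure Ω)]
    (γ : {j : ℤ // j ≠ 0} → Ω → ℝ)
    (hmeas : ∀ j, Measurable (γ j))
    (hindep : iIndepFun γ ℙ)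
    (hgauss : ∀ j, Measure.map (γ j) ℙ = gaussianReal 0 1)
    (K t : ℝ) (hK : 0 < K) (ht : 0 < t) (ht2 : t < 1/2) :
    (ℙ {ω | K ≤ ∑' j : {j : ℤ // j ≠ 0}, (γ j ω)^2 / ((j : ℤ) : ℝ)^2}).toReal
      ≤ Real.exp (-t * K) * (Real.pi * Real.sqrt (2*t)) / Real.sin (Real.pi * Real.sqrt (2*t)) :=
  stmt0_general γ hindep hgauss K t hK ht ht2
end

section
/- Let H be a separable complex Hilbert space and T a bounded linear operator on the k-fold tensor power H^{⊗k}. Then the function g_T(u) = ⟨u^{⊗k} | T | u^{⊗k}⟩ restricted to the ball {u ∈ H : ‖u‖² ≤ K} is Lipschitz with Lipschitz constant at most 2k K^{k−1/2} ‖T‖. -/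
open scoped InnerProductSpace

/-!
Since `⟪u^{⊗k}, v^{⊗k}⟫ = ⟪u, v⟫^k`, the distance `‖u^{⊗k} - v^{⊗k}‖` only depends on the inner
products of `u` and `v`, so it may be computed in the concrete model `u ↦ (u ⊗ u) ⊗ ⋯ ⊗ u`.
There `u^{⊗(m+1)} - v^{⊗(m+1)} = (u^{⊗m} - v^{⊗m}) ⊗ u + v^{⊗m} ⊗ (u - v)` telescopes to
`‖u^{⊗k} - v^{⊗k}‖ ≤ k R^{k-1} ‖u - v‖` on the ball of radius `R = √K`. Finally, with
`a = u^{⊗k}` and `b = v^{⊗k}`, `g_T(u) - g_T(v) = ⟪a - b, T a⟫ + ⟪b, T (a - b)⟫`, and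
`‖a‖, ‖b‖ ≤ R^k`.
-/

universe u

open scoped TensorProduct

section TensorPower

variable {𝕜 : Type*} [RCLike 𝕜] {H : Type u} [NormedAddCommGroup H] [InnerProductSpace 𝕜 H]
  {G : Type*} [NormedAddCommGroup G] [InnerProductSpace 𝕜 G]

theorem TensorProduct.norm_tmul_sub_tmul_le {F : Type*} [NormedAddCommGroup F]
    [InnerProductSpace 𝕜 F] (p q : G) (u v : F) :
    ‖p ⊗ₜ[𝕜] u - q ⊗ₜ[𝕜] v‖ ≤ ‖p - q‖ * ‖u‖ + ‖q‖ * ‖u - v‖ := by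
  have hsplit : p ⊗ₜ[𝕜] u - q ⊗ₜ[𝕜] v = (p - q) ⊗ₜ[𝕜] u + q ⊗ₜ[𝕜] (u - v) := by
    rw [TensorProduct.sub_tmul, TensorProduct.tmul_sub]; abel
  rw [hsplit, ← TensorProduct.norm_tmul (𝕜 := 𝕜), ← TensorProduct.norm_tmul (𝕜 := 𝕜)]
  exact norm_add_le _ _

variable (𝕜) in
/-- `f u` plays the role of `u^{⊗m}`: tensor powers are determined up to isometry by their
inner products. -/
def IsTensorPower (m : ℕ) (f : H → G) : Prop :=
  ∀ u v, ⟪f u, f v⟫_𝕜 = ⟪u, v⟫_𝕜 ^ m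

namespace IsTensorPower

variable {m : ℕ} {f : H → G}

theorem norm_eq (hf : IsTensorPower 𝕜 m f) (u : H) : ‖f u‖ = ‖u‖ ^ m := by
  have h := hf u u
  rw [inner_self_eq_norm_sq_to_K, inner_self_eq_norm_sq_to_K, ← pow_mul, mul_comm, pow_mul]
    at h
  exact_mod_cast (sq_eq_sq₀ (norm_nonneg _) (by positivity)).1 (by exact_mod_cast h)

theorem norm_sub_sq (hf : IsTensorPower 𝕜 m f) (u v : H) :
    ‖f u - f v‖ ^ 2 = ‖u‖ ^ (2 * m) - 2 * RCLike.re (⟪u, v⟫_𝕜 ^ m) + ‖v‖ ^ (2 * m) := by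
  rw [@_root_.norm_sub_sq 𝕜, hf, hf.norm_eq, hf.norm_eq, ← pow_mul, ← pow_mul, mul_comm m]

theorem norm_sub_eq {G' : Type*} [NormedAddCommGroup G'] [InnerProductSpace 𝕜 G'] {g : H → G'}
    (hf : IsTensorPower 𝕜 m f) (hg : IsTensorPower 𝕜 m g) (u v : H) :
    ‖f u - f v‖ = ‖g u - g v‖ :=
  (sq_eq_sq₀ (norm_nonneg _) (norm_nonneg _)).1 (by rw [hf.norm_sub_sq, hg.norm_sub_sq])

theorem tmul (hf : IsTensorPower 𝕜 m f) :
    IsTensorPower 𝕜 (m + 1) fun w ↦ f w ⊗ₜ[𝕜] w := by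
  intro u v
  rw [TensorProduct.inner_tmul, hf, pow_succ]

end IsTensorPower

theorem exists_isTensorPower_norm_sub_le (m : ℕ) :
    ∃ (G : Type u) (_ : NormedAddCommGroup G) (_ : InnerProductSpace 𝕜 G) (f : H → G),
      IsTensorPower 𝕜 (m + 1) f ∧ ∀ (R : ℝ) (u v : H), ‖u‖ ≤ R → ‖v‖ ≤ R →
        ‖f u - f v‖ ≤ (m + 1) * R ^ m * ‖u - v‖ := by
  induction m with
  | zero => exact ⟨H, _, _, id, fun u v ↦ (pow_one _).symm, fun R u v _ _ ↦ by simp⟩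
  | succ m ih =>
    obtain ⟨G, _, _, f, hf, hlip⟩ := ih
    refine ⟨G ⊗[𝕜] H, _, _, _, hf.tmul, fun R u v hu hv ↦ ?_⟩
    have hR : 0 ≤ R := (norm_nonneg u).trans hu
    have hfv : ‖f v‖ ≤ R ^ (m + 1) := hf.norm_eq v ▸ pow_le_pow_left₀ (norm_nonneg v) hv _
    calc ‖f u ⊗ₜ[𝕜] u - f v ⊗ₜ[𝕜] v‖ ≤ ‖f u - f v‖ * ‖u‖ + ‖f v‖ * ‖u - v‖ :=
          TensorProduct.norm_tmul_sub_tmul_le _ _ _ _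
      _ ≤ ((m + 1) * R ^ m * ‖u - v‖) * R + R ^ (m + 1) * ‖u - v‖ := by
          gcongr
          exact hlip R u v hu hv
      _ = (↑(m + 1) + 1) * R ^ (m + 1) * ‖u - v‖ := by push_cast; ring

theorem IsTensorPower.norm_sub_le {m : ℕ} {f : H → G} (hf : IsTensorPower 𝕜 m f) {R : ℝ}
    {u v : H} (hu : ‖u‖ ≤ R) (hv : ‖v‖ ≤ R) :
    ‖f u - f v‖ ≤ m * R ^ (m - 1) * ‖u - v‖ := by
  cases m with
  | zero =>
    have h : ‖f u - f v‖ ^ 2 = 0 := by norm_num [hf.norm_sub_sq u v]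
    simp [pow_eq_zero_iff two_ne_zero |>.1 h]
  | succ m =>
    obtain ⟨G', _, _, g, hg, hlip⟩ := exists_isTensorPower_norm_sub_le (𝕜 := 𝕜) (H := H) m
    rw [hf.norm_sub_eq hg]
    exact_mod_cast hlip R u v hu hv

end TensorPower

theorem ContinuousLinearMap.norm_inner_apply_self_sub_le {𝕜 E : Type*} [RCLike 𝕜]
    [NormedAddCommGroup E] [InnerProductSpace 𝕜 E] (T : E →L[𝕜] E) (a b : E) :
    ‖⟪a, T a⟫_𝕜 - ⟪b, T b⟫_𝕜‖ ≤ (‖a‖ + ‖b‖) * ‖T‖ * ‖a - b‖ := by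
  have hsplit : ⟪a, T a⟫_𝕜 - ⟪b, T b⟫_𝕜 = ⟪a - b, T a⟫_𝕜 + ⟪b, T (a - b)⟫_𝕜 := by
    rw [inner_sub_left, map_sub, inner_sub_right]; ring
  calc ‖⟪a, T a⟫_𝕜 - ⟪b, T b⟫_𝕜‖ ≤ ‖a - b‖ * ‖T a‖ + ‖b‖ * ‖T (a - b)‖ := by
        rw [hsplit]
        exact (norm_add_le _ _).trans (add_le_add (norm_inner_le_norm _ _) (norm_inner_le_norm _ _))
    _ ≤ ‖a - b‖ * (‖T‖ * ‖a‖) + ‖b‖ * (‖T‖ * ‖a - b‖) := by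
        gcongr <;> exact T.le_opNorm _
    _ = (‖a‖ + ‖b‖) * ‖T‖ * ‖a - b‖ := by ring

theorem Real.natCast_mul_sqrt_pow_mul_sqrt_pow_sub_one {K : ℝ} (hK : 0 ≤ K) (k : ℕ) :
    k * (√K ^ k * √K ^ (k - 1)) = k * K ^ ((k : ℝ) - 1 / 2) := by
  rcases Nat.eq_zero_or_pos k with rfl | hk
  · simp
  rw [← pow_add, Real.sqrt_eq_rpow, ← Real.rpow_natCast, ← Real.rpow_mul hK]
  congr 2
  push_cast [Nat.cast_sub (by omega : 1 ≤ k + (k - 1)), Nat.cast_sub hk]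
  ring

theorem stmt3_general {H E : Type*}
    [NormedAddCommGroup H] [InnerProductSpace ℂ H]
    [NormedAddCommGroup E] [InnerProductSpace ℂ E]
    (k : ℕ) (tpow : H → E)
    (htpow : ∀ u v : H, ⟪tpow u, tpow v⟫_ℂ = (⟪u, v⟫_ℂ) ^ k)
    (T : E →L[ℂ] E) (K : ℝ) :
    ∀ u v : H, ‖u‖ ^ 2 ≤ K → ‖v‖ ^ 2 ≤ K →
      ‖⟪tpow u, T (tpow u)⟫_ℂ - ⟪tpow v, T (tpow v)⟫_ℂ‖
        ≤ 2 * k * K ^ ((k : ℝ) - 1/2) * ‖T‖ * ‖u - v‖ := by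
  intro u v hu hv
  have htpow' : IsTensorPower ℂ k tpow := htpow
  have hu' : ‖u‖ ≤ √K := Real.le_sqrt_of_sq_le hu
  have hv' : ‖v‖ ≤ √K := Real.le_sqrt_of_sq_le hv
  have hnorm (w : H) (hw : ‖w‖ ≤ √K) : ‖tpow w‖ ≤ √K ^ k :=
    htpow'.norm_eq w ▸ pow_le_pow_left₀ (norm_nonneg w) hw k
  calc ‖⟪tpow u, T (tpow u)⟫_ℂ - ⟪tpow v, T (tpow v)⟫_ℂ‖
      ≤ (‖tpow u‖ + ‖tpow v‖) * ‖T‖ * ‖tpow u - tpow v‖ := T.norm_inner_apply_self_sub_le _ _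
    _ ≤ (√K ^ k + √K ^ k) * ‖T‖ * (k * √K ^ (k - 1) * ‖u - v‖) := by
        gcongr
        exacts [hnorm u hu', hnorm v hv', htpow'.norm_sub_le hu' hv']
    _ = 2 * (k * (√K ^ k * √K ^ (k - 1))) * ‖T‖ * ‖u - v‖ := by ring
    _ = 2 * k * K ^ ((k : ℝ) - 1/2) * ‖T‖ * ‖u - v‖ := by
        rw [Real.natCast_mul_sqrt_pow_mul_sqrt_pow_sub_one ((sq_nonneg _).trans hu)]; ring

/-- Let `H` be a separable complex Hilbert space and `T` a bounded operator on the `k`-fold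
tensor power of `H` (modelled by a Hilbert space `E` together with the tensor-power map
`tpow : H → E`, characterized by `⟪tpow u, tpow v⟫ = ⟪u,v⟫^k`).  Then
`g_T(u) = ⟨u^{⊗k} | T | u^{⊗k}⟩` restricted to the ball `{u : ‖u‖² ≤ K}` is Lipschitz with
constant at most `2k K^{k−1/2} ‖T‖`. -/
theorem stmt3 {H E : Type*}
    [NormedAddCommGroup H] [InnerProductSpace ℂ H] [CompleteSpace H] [TopologicalSpace.SeparableSpace H]
    [NormedAddCommGroup E] [InnerProductSpace ℂ E] [CompleteSpace E]
    (k : ℕ) (hk : 0 < k) (tpow : H → E)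
    (htpow : ∀ u v : H, ⟪tpow u, tpow v⟫_ℂ = (⟪u, v⟫_ℂ) ^ k)
    (T : E →L[ℂ] E) (K : ℝ) (hK : 0 < K) :
    ∀ u v : H, ‖u‖ ^ 2 ≤ K → ‖v‖ ^ 2 ≤ K →
      ‖⟪tpow u, T (tpow u)⟫_ℂ - ⟪tpow v, T (tpow v)⟫_ℂ‖
        ≤ 2 * k * K ^ ((k : ℝ) - 1/2) * ‖T‖ * ‖u - v‖ :=
  stmt3_general k tpow htpow T K
end

section
/- Let φ : (0,∞) → (0,∞) satisfy φ(0)=1, φ'(0)=0 and the differential inequality r φ'(r) ≤ φ(r) log φ(r) + C r² φ(r) for all r > 0, where C > 0. Then φ(r) ≤ exp(C r²) for all r > 0. -/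
open Real Filter

/-- Herbst's lemma: if `φ` is a positive continuously differentiable function with `φ(0)=1`,
`φ'(0)=0` satisfying `r φ'(r) ≤ φ(r) log φ(r) + C r² φ(r)` for all `r > 0` (with `C > 0`),
then `φ(r) ≤ exp(C r²)` for all `r > 0`. -/
theorem stmt5 (φ : ℝ → ℝ) (C : ℝ) (hC : 0 < C)
    (hpos : ∀ r, 0 < φ r)
    (hdiff : Differentiable ℝ φ) (hcont : Continuous (deriv φ))
    (h0 : φ 0 = 1) (h0' : deriv φ 0 = 0)
    (hineq : ∀ r > 0, r * deriv φ r ≤ φ r * Real.log (φ r) + C * r^2 * φ r) :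
    ∀ r > 0, φ r ≤ Real.exp (C * r^2) := by
  intro r hr
  set F : ℝ → ℝ := fun x => Real.log (φ x) with hF
  have hFd : ∀ x, HasDerivAt F (deriv φ x / φ x) x := fun x =>
    ((hdiff x).hasDerivAt.log (hpos x).ne')
  set H : ℝ → ℝ := fun x => C * x - F x / x with hH
  have hHd : ∀ x ∈ Set.Ioi (0:ℝ), HasDerivAt H
      (C * 1 - (deriv φ x / φ x * x - F x * 1) / x ^ 2) x := by
    intro x hx
    exact ((hasDerivAt_id x).const_mul C).sub
      ((hFd x).div (hasDerivAt_id x) (ne_of_gt hx))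
  have hmono : MonotoneOn H (Set.Ioi 0) := by
    apply monotoneOn_of_deriv_nonneg (convex_Ioi 0)
    · intro x hx
      exact (hHd x hx).continuousAt.continuousWithinAt
    · intro x hx
      rw [interior_Ioi] at hx
      exact ((hHd x hx).differentiableAt).differentiableWithinAt
    · intro x hx
      rw [interior_Ioi] at hx
      rw [(hHd x hx).deriv]
      have hx0 : (0:ℝ) < x := hx
      have hφ : (0:ℝ) < φ x := hpos x
      have key : deriv φ x / φ x * x - F x ≤ C * x ^ 2 := by
        have h1 : deriv φ x / φ x * x = x * deriv φ x / φ x := by ring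
        rw [h1, sub_le_iff_le_add, div_le_iff₀ hφ]
        have := hineq x hx0
        nlinarith [this]
      have hx2 : (0:ℝ) < x ^ 2 := by positivity
      rw [mul_one, mul_one, sub_nonneg, div_le_iff₀ hx2]
      nlinarith [key]
  -- limit of F s / s as s → 0⁺ is 0
  have hF0 : F 0 = 0 := by simp [hF, h0]
  have hd0 : HasDerivAt F 0 0 := by
    have := hFd 0
    rwa [h0, h0', zero_div] at this
  have hslope : Tendsto (fun s => F s / s) (nhdsWithin 0 (Set.Ioi 0)) (nhds 0) := by
    have h1 : Tendsto (slope F 0) (nhdsWithin 0 {0}ᶜ) (nhds 0) :=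
      hasDerivAt_iff_tendsto_slope.mp hd0
    have h2 : Tendsto (slope F 0) (nhdsWithin 0 (Set.Ioi 0)) (nhds 0) :=
      h1.mono_left (nhdsWithin_mono _ (fun x hx => ne_of_gt hx))
    refine h2.congr' ?_
    filter_upwards [self_mem_nhdsWithin] with s hs
    simp [slope_def_field, hF0]
  have hHt : Tendsto H (nhdsWithin 0 (Set.Ioi 0)) (nhds 0) := by
    have hc : Tendsto (fun s : ℝ => C * s) (nhdsWithin 0 (Set.Ioi 0)) (nhds 0) := by
      have : Tendsto (fun s : ℝ => C * s) (nhds 0) (nhds (C * 0)) :=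
        (continuous_const.mul continuous_id).tendsto 0
      rw [mul_zero] at this
      exact this.mono_left nhdsWithin_le_nhds
    have := hc.sub hslope
    rwa [sub_zero] at this
  have hle : 0 ≤ H r := by
    refine le_of_tendsto hHt ?_
    filter_upwards [Ioo_mem_nhdsGT_of_mem ⟨le_refl 0, hr⟩] with s hs
    exact hmono hs.1 (Set.mem_Ioi.mpr hr) (le_of_lt hs.2)
  have hlog : Real.log (φ r) ≤ C * r ^ 2 := by
    have : F r / r ≤ C * r := by simpa [hH] using hle
    have := (div_le_iff₀ hr).mp this
    calc Real.log (φ r) = F r := rfl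
      _ ≤ C * r * r := this
      _ = C * r ^ 2 := by ring
  calc φ r = Real.exp (Real.log (φ r)) := (Real.exp_log (hpos r)).symm
    _ ≤ Real.exp (C * r ^ 2) := Real.exp_le_exp.mpr hlog
end
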